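/- Every finite P-basis B = {b₁,…,b_M} of a P-closed set Ω ⊆ 𝔽ⁿ admits a dual P-basis consisting of M skew polynomials of degree less than M. Moreover, any two dual P-bases {F₁,…,F_M} and {F₁',…,F_M'} of the same P-basis B define the same skew polynomial functions on Ω: Fᵢ(a) = Fᵢ'(a) for all a ∈ Ω and all i. -/

import Mathlib

/- Common setup: free multivariate skew polynomial rings over a division ring. -/

open Matrix Finsupp

/-- The underlying left `𝔽`-module of the free multivariate skew polynomial ring:
the free left `𝔽`-module with basis the free monoid on `n` symbols. -/
abbrev SkewPoly (𝔽 : Type*) [DivisionRing 𝔽] (n : ℕ) : Type _ := FreeMonoid (Fin n) →₀ 𝔽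

namespace SkewPoly

variable {𝔽 : Type*} [DivisionRing 𝔽] {n : ℕ}

/-- The variable `xᵢ` as a skew polynomial. -/
noncomputable def X (𝔽 : Type*) [DivisionRing 𝔽] {n : ℕ} (i : Fin n) : SkewPoly 𝔽 n :=
  Finsupp.single (FreeMonoid.of i) 1

/-- The constant `a` as a skew polynomial (coefficient on the empty word). -/
noncomputable def C {𝔽 : Type*} [DivisionRing 𝔽] (n : ℕ) (a : 𝔽) :
    SkewPoly 𝔽 n := Finsupp.single 1 a

/-- The degree of a skew polynomial: the maximal length of a word in its support
(`⊥` for the zero polynomial). -/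
noncomputable def deg (F : SkewPoly 𝔽 n) : WithBot ℕ :=
  F.support.sup fun m => ((FreeMonoid.length m : ℕ) : WithBot ℕ)

/-- A matrix morphism `σ : 𝔽 → Mₙ(𝔽)`: a unital ring homomorphism. -/
def IsMatrixMorphism (σ : 𝔽 → Matrix (Fin n) (Fin n) 𝔽) : Prop :=
  σ 1 = 1 ∧ (∀ a b : 𝔽, σ (a + b) = σ a + σ b) ∧ (∀ a b : 𝔽, σ (a * b) = σ a * σ b)

/-- A `σ`-vector derivation `δ : 𝔽 → 𝔽ⁿ`: additive with `δ(ab) = σ(a)δ(b) + δ(a)b`. -/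
def IsVectorDerivation (σ : 𝔽 → Matrix (Fin n) (Fin n) 𝔽) (δ : 𝔽 → Fin n → 𝔽) : Prop :=
  (∀ a b : 𝔽, δ (a + b) = δ a + δ b) ∧
    (∀ a b : 𝔽, δ (a * b) = σ a *ᵥ δ b + fun i => δ a i * b)

/-- A multiplication on the free module `SkewPoly 𝔽 n` making it a ring (with the
existing addition) whose identity is the empty word, which restricts to concatenation
on monomials, is additive on degrees of nonzero elements, and for which left
multiplication by constants is scalar multiplication. -/
structure RawMul (𝔽 : Type*) [DivisionRing 𝔽] (n : ℕ) where
  /-- the multiplication -/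
  mul : SkewPoly 𝔽 n → SkewPoly 𝔽 n → SkewPoly 𝔽 n
  mul_add : ∀ F G H : SkewPoly 𝔽 n, mul F (G + H) = mul F G + mul F H
  add_mul : ∀ F G H : SkewPoly 𝔽 n, mul (F + G) H = mul F H + mul G H
  mul_assoc : ∀ F G H : SkewPoly 𝔽 n, mul (mul F G) H = mul F (mul G H)
  one_mul : ∀ F : SkewPoly 𝔽 n, mul (C n 1) F = F
  mul_one : ∀ F : SkewPoly 𝔽 n, mul F (C n 1) = F
  mono_mul_mono : ∀ m m' : FreeMonoid (Fin n),
    mul (Finsupp.single m 1) (Finsupp.single m' 1) = Finsupp.single (m * m') 1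
  const_mul : ∀ (a : 𝔽) (F : SkewPoly 𝔽 n), mul (C n a) F = a • F
  deg_mul : ∀ F G : SkewPoly 𝔽 n, F ≠ 0 → G ≠ 0 → deg (mul F G) = deg F + deg G

/-- The multiplication `S` satisfies the commutation rule
`xᵢ a = Σⱼ σ_{i,j}(a) xⱼ + δᵢ(a)`. -/
def HasCommRule (S : RawMul 𝔽 n) (σ : 𝔽 → Matrix (Fin n) (Fin n) 𝔽)
    (δ : 𝔽 → Fin n → 𝔽) : Prop :=
  ∀ (i : Fin n) (a : 𝔽),
    S.mul (X 𝔽 i) (C n a) =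
      (∑ j : Fin n, Finsupp.single (FreeMonoid.of j) (σ a i j)) + C n (δ a i)

/-- `F = Σᵢ Gᵢ (xᵢ - aᵢ) + b`, i.e. `b` is a remainder of `F` upon right division
by `x₁ - a₁, …, xₙ - aₙ`; equivalently `F - b` lies in the left ideal generated by
the `xᵢ - aᵢ`. -/
def Decomposes (S : RawMul 𝔽 n) (a : Fin n → 𝔽) (F : SkewPoly 𝔽 n) (b : 𝔽) : Prop :=
  ∃ G : Fin n → SkewPoly 𝔽 n,
    F = (∑ i : Fin n, S.mul (G i) (X 𝔽 i - C n (a i))) + C n b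

/-- The evaluation of `F` at the point `a`: the unique `b ∈ 𝔽` such that `F - b`
lies in the left ideal generated by `x₁ - a₁, …, xₙ - aₙ`. -/
noncomputable def eval (S : RawMul 𝔽 n) (a : Fin n → 𝔽) (F : SkewPoly 𝔽 n) : 𝔽 :=
  letI := Classical.propDecidable (∃ b : 𝔽, Decomposes S a F b)
  if h : ∃ b : 𝔽, Decomposes S a F b then h.choose else 0

/-- The `(σ,δ)`-conjugate `a^c = σ(c) a c⁻¹ + δ(c) c⁻¹` of `a` with respect to `c`. -/
noncomputable def conj (σ : 𝔽 → Matrix (Fin n) (Fin n) 𝔽) (δ : 𝔽 → Fin n → 𝔽)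
    (a : Fin n → 𝔽) (c : 𝔽) : Fin n → 𝔽 :=
  fun i => (σ c *ᵥ a) i * c⁻¹ + δ c i * c⁻¹

/-- `I(Ω)`: the set of skew polynomials vanishing at every point of `Ω`. -/
def zeroIdeal (S : RawMul 𝔽 n) (Ω : Set (Fin n → 𝔽)) : Set (SkewPoly 𝔽 n) :=
  {F | ∀ a ∈ Ω, eval S a F = 0}

/-- The left ideal of `SkewPoly 𝔽 n` generated by `x₁ - a₁, …, xₙ - aₙ`
(the set of sums of left multiples of the generators). -/
def pointIdeal (S : RawMul 𝔽 n) (a : Fin n → 𝔽) : Set (SkewPoly 𝔽 n) :=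
  {F | ∃ G : Fin n → SkewPoly 𝔽 n, F = ∑ i : Fin n, S.mul (G i) (X 𝔽 i - C n (a i))}

/-- The P-closure `Ω̄ = Z(I(Ω))` of a set of points `Ω`. -/
def pClosure (S : RawMul 𝔽 n) (Ω : Set (Fin n → 𝔽)) : Set (Fin n → 𝔽) :=
  {a | ∀ F ∈ zeroIdeal S Ω, eval S a F = 0}

/-- `Ω` is P-closed if it equals its P-closure. -/
def IsPClosed (S : RawMul 𝔽 n) (Ω : Set (Fin n → 𝔽)) : Prop := pClosure S Ω = Ω

/-- `B` is P-independent: no point of `B` lies in the P-closure of the rest. -/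
def PIndep (S : RawMul 𝔽 n) (B : Set (Fin n → 𝔽)) : Prop :=
  ∀ a ∈ B, a ∉ pClosure S (B \ {a})

/-- `B` is a P-basis of `Ω`: a P-independent subset of `Ω` whose P-closure is `Ω`. -/
def IsPBasis (S : RawMul 𝔽 n) (B Ω : Set (Fin n → 𝔽)) : Prop :=
  B ⊆ Ω ∧ PIndep S B ∧ pClosure S B = Ω

/-- `Ω` is finitely generated: it is the P-closure of a finite subset of itself. -/
def FinGen (S : RawMul 𝔽 n) (Ω : Set (Fin n → 𝔽)) : Prop :=
  ∃ G : Set (Fin n → 𝔽), G.Finite ∧ G ⊆ Ω ∧ pClosure S G = Ω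

/-- The rank of a P-closed set: the (common) cardinality of its P-bases. -/
noncomputable def pRank (S : RawMul 𝔽 n) (Ω : Set (Fin n → 𝔽)) : ℕ :=
  sInf {k : ℕ | ∃ B : Finset (Fin n → 𝔽), IsPBasis S ↑B Ω ∧ B.card = k}

/-- The image of the evaluation map `E_Ω : R → 𝔽^Ω`, as a left `𝔽`-subspace of `𝔽^Ω`
(the span of the image; the image is itself a subspace since evaluation is left linear). -/
noncomputable def evalSpan (S : RawMul 𝔽 n) (Ω : Set (Fin n → 𝔽)) :
    Submodule 𝔽 (↥Ω → 𝔽) :=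
  Submodule.span 𝔽 (Set.range fun F : SkewPoly 𝔽 n => fun a : ↥Ω => eval S ↑a F)

/-- `I` is a two-sided ideal with respect to the multiplication `S`. -/
def IsTwoSidedIdealSet (S : RawMul 𝔽 n) (I : Set (SkewPoly 𝔽 n)) : Prop :=
  (0 : SkewPoly 𝔽 n) ∈ I ∧ (∀ F ∈ I, ∀ G ∈ I, F + G ∈ I) ∧ (∀ F ∈ I, -F ∈ I) ∧
    (∀ F ∈ I, ∀ G : SkewPoly 𝔽 n, S.mul G F ∈ I) ∧
    (∀ F ∈ I, ∀ G : SkewPoly 𝔽 n, S.mul F G ∈ I)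


/-- The left row-rank of the skew Vandermonde matrix `V_d(G)`: the dimension of the
left `𝔽`-span of its rows `(N_m(c))_{c ∈ G}`, indexed by the words `m` of length `< d`,
where `N_m(c)` is the evaluation of the monomial `m` at the point `c`. -/
noncomputable def vandermondeRank (S : RawMul 𝔽 n) (G : Finset (Fin n → 𝔽)) (d : ℕ) :
    Cardinal :=
  Module.rank 𝔽 ↥(Submodule.span 𝔽 (Set.range
    fun m : {m : FreeMonoid (Fin n) // FreeMonoid.length m < d} =>
      fun c : ↥G => eval S ↑c (Finsupp.single (m : FreeMonoid (Fin n)) (1 : 𝔽))))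

end SkewPoly

open SkewPoly

/-!
Evaluation at `a` is reduction modulo the left ideal `I_a = Σᵢ R (xᵢ - aᵢ)`: every skew
polynomial is congruent to a unique constant, uniqueness coming from a comparison of
coefficients at a longest word. If `F ≡ c (mod I_a)` then `xᵢ F ≡ (σ(c) a + δ(c))ᵢ`, so the
values of `xᵢ F` on the points `b` are determined by the values of `F`. Hence the subspaces
`W_d ⊆ 𝔽^M` of value vectors of polynomials of degree `< d` form a chain which, once it stops
growing, stays constant; since `dim 𝔽^M = M`, the whole image of evaluation is `W_M`.
P-independence puts every unit vector in that image, which gives the dual P-basis, and two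
dual P-bases differ by polynomials vanishing on `B`, hence on its P-closure `Ω`.
-/

theorem Submodule.le_apply_finrank_of_monotone {K V : Type*} [DivisionRing K] [AddCommGroup V]
    [Module K V] [FiniteDimensional K V] {W : ℕ → Submodule K V} (hW : Monotone W)
    (hstep : ∀ d, W (d + 1) ≤ W d → W (d + 2) ≤ W (d + 1)) (e : ℕ) :
    W e ≤ W (Module.finrank K V) := by
  by_cases hstop : ∃ d < Module.finrank K V, W (d + 1) ≤ W d
  · obtain ⟨d, hd, hle⟩ := hstop
    have hanti : Antitone fun k => W (d + k) := antitone_nat_of_succ_le fun k => by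
      induction k with
      | zero => exact hle
      | succ k ih => exact hstep (d + k) ih
    exact (hW (Nat.le_add_left e d)).trans ((hanti (Nat.zero_le e)).trans (hW hd.le))
  · push Not at hstop
    have hrank : ∀ d ≤ Module.finrank K V, d ≤ Module.finrank K (W d) := by
      intro d
      induction d with
      | zero => simp
      | succ d ih =>
        intro hd
        have := Submodule.finrank_lt_finrank_of_lt
          (lt_of_le_not_ge (hW (Nat.le_add_right d 1)) (hstop d hd))
        have := ih (Nat.le_of_succ_le hd)
        omega
    rw [Submodule.eq_top_of_finrank_eq ((Submodule.finrank_le _).antisymm (hrank _ le_rfl))]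
    exact le_top

namespace SkewPoly

variable {𝔽 : Type*} [DivisionRing 𝔽] {n : ℕ}

theorem deg_le_iff {F : SkewPoly 𝔽 n} {d : ℕ} :
    deg F ≤ d ↔ ∀ m ∈ F.support, m.length ≤ d := by
  simp [deg, Finset.sup_le_iff]

theorem deg_lt_iff {F : SkewPoly 𝔽 n} {d : ℕ} :
    deg F < d ↔ ∀ m ∈ F.support, m.length < d := by
  simp [deg]

theorem deg_zero : deg (0 : SkewPoly 𝔽 n) = ⊥ := rfl

theorem apply_eq_zero_of_deg_lt {F : SkewPoly 𝔽 n} {w : FreeMonoid (Fin n)}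
    (h : deg F < w.length) : F w = 0 := by
  by_contra hw
  exact (deg_lt_iff.1 h w (Finsupp.mem_support_iff.2 hw)).false

theorem deg_C_le (c : 𝔽) : deg (C n c) ≤ 0 :=
  deg_le_iff.2 fun m hm => by
    rw [Finset.mem_singleton.1 (Finsupp.support_single_subset hm)]
    rfl

namespace RawMul

variable (S : RawMul 𝔽 n)

noncomputable def mulLeft (F : SkewPoly 𝔽 n) : SkewPoly 𝔽 n →+ SkewPoly 𝔽 n :=
  AddMonoidHom.mk' (S.mul F) (S.mul_add F)

noncomputable def mulRight (G : SkewPoly 𝔽 n) : SkewPoly 𝔽 n →ₗ[𝔽] SkewPoly 𝔽 n where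
  toFun F := S.mul F G
  map_add' F F' := S.add_mul F F' G
  map_smul' c F := by simp only [RingHom.id_apply, ← S.const_mul, S.mul_assoc]

theorem mul_zero (F : SkewPoly 𝔽 n) : S.mul F 0 = 0 := (S.mulLeft F).map_zero

theorem zero_mul (G : SkewPoly 𝔽 n) : S.mul 0 G = 0 := (S.mulRight G).map_zero

theorem mul_sub (F G H : SkewPoly 𝔽 n) : S.mul F (G - H) = S.mul F G - S.mul F H :=
  (S.mulLeft F).map_sub G H

theorem smul_mul (c : 𝔽) (F G : SkewPoly 𝔽 n) : S.mul (c • F) G = c • S.mul F G :=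
  (S.mulRight G).map_smul c F

theorem mul_sum {ι : Type*} (s : Finset ι) (F : SkewPoly 𝔽 n) (G : ι → SkewPoly 𝔽 n) :
    S.mul F (∑ i ∈ s, G i) = ∑ i ∈ s, S.mul F (G i) :=
  map_sum (S.mulLeft F) G s

theorem X_mul_single (i : Fin n) (m : FreeMonoid (Fin n)) :
    S.mul (X 𝔽 i) (Finsupp.single m 1) = Finsupp.single (FreeMonoid.of i * m) 1 :=
  S.mono_mul_mono _ _

theorem mul_X_eq_mapDomain (F : SkewPoly 𝔽 n) (i : Fin n) :
    S.mul F (X 𝔽 i) = F.mapDomain (· * FreeMonoid.of i) := by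
  induction F using Finsupp.induction_linear with
  | zero => rw [S.zero_mul, Finsupp.mapDomain_zero]
  | add F G hF hG => rw [S.add_mul, hF, hG, Finsupp.mapDomain_add]
  | single m c =>
    rw [Finsupp.mapDomain_single, ← Finsupp.smul_single_one, S.smul_mul, X, S.mono_mul_mono,
      Finsupp.smul_single_one]

theorem mul_X_apply_mul_of (F : SkewPoly 𝔽 n) (i j : Fin n) (m : FreeMonoid (Fin n)) :
    S.mul F (X 𝔽 i) (m * FreeMonoid.of j) = if i = j then F m else 0 := by
  rw [mul_X_eq_mapDomain]
  split_ifs with h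
  · subst h
    exact Finsupp.mapDomain_apply (mul_left_injective _) F m
  · refine Finsupp.mapDomain_of_notMem_range _ _ ?_
    rintro ⟨m', hm'⟩
    have := congrArg FreeMonoid.toList hm'
    simp only [FreeMonoid.toList_mul, FreeMonoid.toList_of] at this
    exact h (List.singleton_inj.1 (List.append_inj' this rfl).2)

theorem deg_mul_C_le (F : SkewPoly 𝔽 n) (c : 𝔽) : deg (S.mul F (C n c)) ≤ deg F := by
  by_cases hF : F = 0
  · rw [hF, S.zero_mul]
  by_cases hc : C n c = 0
  · rw [hc, S.mul_zero, deg_zero]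
    exact bot_le
  rw [S.deg_mul F _ hF hc]
  calc deg F + deg (C n c) ≤ deg F + 0 := by gcongr; exact deg_C_le c
    _ = deg F := add_zero _

theorem deg_X_mul_lt {F : SkewPoly 𝔽 n} {d : ℕ} (i : Fin n) (h : deg F < d) :
    deg (S.mul (X 𝔽 i) F) < (d + 1 : ℕ) := by
  by_cases hF : F = 0
  · rw [hF, S.mul_zero, deg_zero]
    exact WithBot.bot_lt_coe _
  have hX : X 𝔽 i ≠ 0 := Finsupp.single_ne_zero.2 one_ne_zero
  rw [S.deg_mul _ _ hX hF, X, deg, Finsupp.support_single _ one_ne_zero,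
    Finset.sup_singleton, FreeMonoid.length_of, add_comm, Nat.cast_add]
  exact WithBot.add_lt_add_right WithBot.one_ne_bot h

theorem exists_ne_one_apply_ne_zero (a : Fin n → 𝔽) {G : Fin n → SkewPoly 𝔽 n} (hG : G ≠ 0) :
    ∃ w ≠ 1, (∑ i, S.mul (G i) (X 𝔽 i - C n (a i))) w ≠ 0 := by
  classical
  obtain ⟨i, hi⟩ := Function.ne_iff.1 hG
  obtain ⟨m, hm⟩ := Finsupp.support_nonempty_iff.2 hi
  obtain ⟨⟨i₀, m₀⟩, hp, hmax⟩ := (Finset.univ.sigma fun i => (G i).support).exists_max_image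
    (fun p => p.2.length) ⟨⟨i, m⟩, Finset.mem_sigma.2 ⟨Finset.mem_univ i, hm⟩⟩
  have hdeg (i : Fin n) : deg (G i) < (m₀ * FreeMonoid.of i₀).length := by
    refine deg_lt_iff.2 fun m hm => ?_
    have : m.length ≤ m₀.length := hmax ⟨i, m⟩ (Finset.mem_sigma.2 ⟨Finset.mem_univ i, hm⟩)
    simp only [FreeMonoid.length_mul, FreeMonoid.length_of]
    omega
  -- at `m₀ xᵢ₀`, for a longest word `m₀` of the `Gᵢ`, only the term `Gᵢ₀ xᵢ₀` has a coefficient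
  refine ⟨m₀ * FreeMonoid.of i₀, fun h => by simpa using congrArg FreeMonoid.length h, ?_⟩
  simp only [Finsupp.finsetSum_apply, S.mul_sub, Finsupp.sub_apply, mul_X_apply_mul_of,
    apply_eq_zero_of_deg_lt ((S.deg_mul_C_le _ _).trans_lt (hdeg _)), sub_zero,
    Finset.sum_ite_eq', Finset.mem_univ, if_true]
  exact (Finset.mem_sigma.1 hp).2 |> Finsupp.mem_support_iff.1

end RawMul

def pointIdealSubmodule (S : RawMul 𝔽 n) (a : Fin n → 𝔽) : Submodule 𝔽 (SkewPoly 𝔽 n) where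
  carrier := pointIdeal S a
  zero_mem' := ⟨0, by simp [S.zero_mul]⟩
  add_mem' := by
    rintro _ _ ⟨G, rfl⟩ ⟨G', rfl⟩
    exact ⟨G + G', by simp [S.add_mul, Finset.sum_add_distrib]⟩
  smul_mem' := by
    rintro c _ ⟨G, rfl⟩
    exact ⟨c • G, by simp [S.smul_mul, Finset.smul_sum]⟩

section pointIdeal

variable {S : RawMul 𝔽 n} {a : Fin n → 𝔽} {σ : 𝔽 → Matrix (Fin n) (Fin n) 𝔽}
  {δ : 𝔽 → Fin n → 𝔽}

theorem mul_mem_pointIdealSubmodule (H : SkewPoly 𝔽 n) {F : SkewPoly 𝔽 n}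
    (hF : F ∈ pointIdealSubmodule S a) : S.mul H F ∈ pointIdealSubmodule S a := by
  obtain ⟨G, rfl⟩ := hF
  exact ⟨fun i => S.mul H (G i), by simp [S.mul_sum, S.mul_assoc]⟩

theorem eq_zero_of_C_mem_pointIdealSubmodule {c : 𝔽} (h : C n c ∈ pointIdealSubmodule S a) :
    c = 0 := by
  classical
  obtain ⟨G, hG⟩ := h
  by_cases hG0 : G = 0
  · simpa [hG0, S.zero_mul, C] using hG
  obtain ⟨w, hw1, hw⟩ := S.exists_ne_one_apply_ne_zero a hG0
  rw [← hG, C, Finsupp.single_apply, if_neg (Ne.symm hw1)] at hw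
  exact absurd rfl hw

-- `xᵢ c - (σ(c) a + δ(c))ᵢ = Σₖ σᵢₖ(c) (xₖ - aₖ)` by the commutation rule
theorem X_mul_C_sub_C_mem (hS : HasCommRule S σ δ) (i : Fin n) (c : 𝔽) :
    S.mul (X 𝔽 i) (C n c) - C n ((σ c *ᵥ a) i + δ c i) ∈ pointIdealSubmodule S a := by
  refine ⟨fun k => C n (σ c i k), ?_⟩
  rw [hS i c]
  simp only [S.const_mul]
  simp only [smul_sub, X, C, Finsupp.smul_single, smul_eq_mul, mul_one,
    Matrix.mulVec, dotProduct, Finsupp.single_add, Finsupp.single_finsetSum,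
    Finset.sum_sub_distrib]
  abel

theorem X_mul_sub_C_mem (hS : HasCommRule S σ δ) (i : Fin n) {F : SkewPoly 𝔽 n} {c : 𝔽}
    (h : F - C n c ∈ pointIdealSubmodule S a) :
    S.mul (X 𝔽 i) F - C n ((σ c *ᵥ a) i + δ c i) ∈ pointIdealSubmodule S a := by
  have := add_mem (mul_mem_pointIdealSubmodule (X 𝔽 i) h) (X_mul_C_sub_C_mem hS i c)
  rwa [S.mul_sub, sub_add_sub_cancel] at this

theorem exists_sub_C_mem (hS : HasCommRule S σ δ) (F : SkewPoly 𝔽 n) :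
    ∃ c, F - C n c ∈ pointIdealSubmodule S a := by
  have monomial (m : FreeMonoid (Fin n)) :
      ∃ c, Finsupp.single m 1 - C n c ∈ pointIdealSubmodule S a := by
    induction m using FreeMonoid.inductionOn' with
    | one => exact ⟨1, by simp [C]⟩
    | of_mul i m ih =>
      obtain ⟨c, hc⟩ := ih
      exact ⟨_, S.X_mul_single i m ▸ X_mul_sub_C_mem hS i hc⟩
  induction F using Finsupp.induction_linear with
  | zero => exact ⟨0, by simp [C]⟩
  | add F G hF hG =>
    obtain ⟨c, hc⟩ := hF
    obtain ⟨c', hc'⟩ := hG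
    refine ⟨c + c', ?_⟩
    convert add_mem hc hc' using 1
    simp only [C, Finsupp.single_add]
    abel
  | single m e =>
    obtain ⟨c, hc⟩ := monomial m
    refine ⟨e * c, ?_⟩
    convert Submodule.smul_mem _ e hc using 1
    simp [C, smul_sub, Finsupp.smul_single]

theorem decomposes_iff {F : SkewPoly 𝔽 n} {c : 𝔽} :
    Decomposes S a F c ↔ F - C n c ∈ pointIdealSubmodule S a :=
  exists_congr fun _ => sub_eq_iff_eq_add.symm

theorem eq_of_sub_C_mem {F : SkewPoly 𝔽 n} {c c' : 𝔽} (h : F - C n c ∈ pointIdealSubmodule S a)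
    (h' : F - C n c' ∈ pointIdealSubmodule S a) : c = c' := by
  have := sub_mem h' h
  rw [sub_sub_sub_cancel_left, C, C, ← Finsupp.single_sub] at this
  exact sub_eq_zero.1 (eq_zero_of_C_mem_pointIdealSubmodule this)

theorem eval_eq_of_sub_C_mem {F : SkewPoly 𝔽 n} {c : 𝔽}
    (h : F - C n c ∈ pointIdealSubmodule S a) : eval S a F = c := by
  have hex : ∃ b, Decomposes S a F b := ⟨c, decomposes_iff.2 h⟩
  rw [eval, dif_pos hex]
  exact eq_of_sub_C_mem (decomposes_iff.1 hex.choose_spec) h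

theorem sub_C_eval_mem (hS : HasCommRule S σ δ) (F : SkewPoly 𝔽 n) :
    F - C n (eval S a F) ∈ pointIdealSubmodule S a := by
  obtain ⟨c, hc⟩ := exists_sub_C_mem hS F
  rwa [eval_eq_of_sub_C_mem hc]

theorem eval_X_mul (hS : HasCommRule S σ δ) (i : Fin n) (F : SkewPoly 𝔽 n) :
    eval S a (S.mul (X 𝔽 i) F) = (σ (eval S a F) *ᵥ a) i + δ (eval S a F) i :=
  eval_eq_of_sub_C_mem (X_mul_sub_C_mem hS i (sub_C_eval_mem hS F))

end pointIdeal

variable {S : RawMul 𝔽 n} {σ : 𝔽 → Matrix (Fin n) (Fin n) 𝔽} {δ : 𝔽 → Fin n → 𝔽}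

noncomputable def leval (hS : HasCommRule S σ δ) (a : Fin n → 𝔽) : SkewPoly 𝔽 n →ₗ[𝔽] 𝔽 where
  toFun := eval S a
  map_add' F G := eval_eq_of_sub_C_mem <| by
    convert add_mem (sub_C_eval_mem hS F) (sub_C_eval_mem hS G) using 1
    simp only [C, Finsupp.single_add]
    abel
  map_smul' c F := eval_eq_of_sub_C_mem <| by
    convert Submodule.smul_mem _ c (sub_C_eval_mem hS F) using 1
    simp [C, smul_sub, Finsupp.smul_single]

theorem leval_apply (hS : HasCommRule S σ δ) (a : Fin n → 𝔽) (F : SkewPoly 𝔽 n) :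
    leval hS a F = eval S a F := rfl

theorem eval_eq_of_eval_eq_of_mem_pClosure (hS : HasCommRule S σ δ) {B : Set (Fin n → 𝔽)}
    {F F' : SkewPoly 𝔽 n} (h : ∀ b ∈ B, eval S b F = eval S b F') {a : Fin n → 𝔽}
    (ha : a ∈ pClosure S B) : eval S a F = eval S a F' := by
  have := ha (F - F') fun b hb => by
    rw [← leval_apply hS, map_sub, leval_apply, leval_apply, h b hb, sub_self]
  rwa [← leval_apply hS, map_sub, sub_eq_zero] at this

noncomputable def levalPi (hS : HasCommRule S σ δ) {ι : Type*} (b : ι → Fin n → 𝔽) :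
    SkewPoly 𝔽 n →ₗ[𝔽] (ι → 𝔽) :=
  LinearMap.pi fun j => leval hS (b j)

theorem levalPi_apply (hS : HasCommRule S σ δ) {ι : Type*} (b : ι → Fin n → 𝔽)
    (F : SkewPoly 𝔽 n) (j : ι) : levalPi hS b F j = eval S (b j) F := rfl

theorem single_mem_range_levalPi (hS : HasCommRule S σ δ) {ι : Type*} [DecidableEq ι]
    {b : ι → Fin n → 𝔽} (hb : Function.Injective b) (hB : PIndep S (Set.range b)) (i : ι) :
    Pi.single i 1 ∈ LinearMap.range (levalPi hS b) := by
  obtain ⟨F, hF, hFi⟩ : ∃ F ∈ zeroIdeal S (Set.range b \ {b i}), eval S (b i) F ≠ 0 := by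
    simpa [pClosure] using hB (b i) ⟨i, rfl⟩
  refine ⟨(eval S (b i) F)⁻¹ • F, funext fun j => ?_⟩
  rw [map_smul, Pi.smul_apply, levalPi_apply, smul_eq_mul]
  by_cases hj : j = i
  · subst hj
    rw [inv_mul_cancel₀ hFi, Pi.single_eq_same]
  · rw [hF (b j) ⟨⟨j, rfl⟩, fun h => hj (hb h)⟩, mul_zero, Pi.single_eq_of_ne hj]

def degLT (𝔽 : Type*) [DivisionRing 𝔽] (n d : ℕ) : Submodule 𝔽 (SkewPoly 𝔽 n) :=
  Finsupp.supported 𝔽 𝔽 {m | m.length < d}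

theorem mem_degLT {F : SkewPoly 𝔽 n} {d : ℕ} : F ∈ degLT 𝔽 n d ↔ deg F < d :=
  (Finsupp.mem_supported _ _).trans deg_lt_iff.symm

theorem exists_mem_degLT (F : SkewPoly 𝔽 n) : ∃ d, F ∈ degLT 𝔽 n d :=
  ⟨F.support.sup FreeMonoid.length + 1, fun _ hm => Nat.lt_succ_of_le (Finset.le_sup hm)⟩

theorem degLT_mono : Monotone (degLT 𝔽 n) :=
  fun _ _ h => Finsupp.supported_mono fun _ hm => lt_of_lt_of_le hm h

noncomputable def valuesDegLT (hS : HasCommRule S σ δ) {ι : Type*} (b : ι → Fin n → 𝔽) (d : ℕ) :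
    Submodule 𝔽 (ι → 𝔽) :=
  (degLT 𝔽 n d).map (levalPi hS b)

section valuesDegLT

variable (hS : HasCommRule S σ δ) {ι : Type*} (b : ι → Fin n → 𝔽)

theorem levalPi_X_mul_mem {F : SkewPoly 𝔽 n} {d : ℕ} (i : Fin n)
    (h : levalPi hS b F ∈ valuesDegLT hS b d) :
    levalPi hS b (S.mul (X 𝔽 i) F) ∈ valuesDegLT hS b (d + 1) := by
  obtain ⟨H, hH, hHF⟩ := h
  refine ⟨S.mul (X 𝔽 i) H, mem_degLT.2 (S.deg_X_mul_lt i (mem_degLT.1 hH)), funext fun j => ?_⟩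
  have hHFj : eval S (b j) H = eval S (b j) F := congrFun hHF j
  simp only [levalPi_apply, eval_X_mul hS, hHFj]

theorem valuesDegLT_succ_succ_le {d : ℕ}
    (h : valuesDegLT hS b (d + 1) ≤ valuesDegLT hS b d) :
    valuesDegLT hS b (d + 2) ≤ valuesDegLT hS b (d + 1) := by
  rw [valuesDegLT, degLT, Finsupp.supported_eq_span_single, Submodule.map_span_le]
  rintro _ ⟨m, hm, rfl⟩
  induction m using FreeMonoid.casesOn with
  | one => exact Submodule.mem_map_of_mem (Finsupp.single_mem_supported 𝔽 _ (Nat.succ_pos d))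
  | of_mul i m =>
    have hm : Finsupp.single m 1 ∈ degLT 𝔽 n (d + 1) :=
      Finsupp.single_mem_supported 𝔽 _ <| by
        simp only [Set.mem_ofPred_eq, FreeMonoid.length_mul, FreeMonoid.length_of] at hm ⊢
        omega
    show levalPi hS b (Finsupp.single (FreeMonoid.of i * m) 1) ∈ _
    rw [← S.X_mul_single]
    exact levalPi_X_mul_mem hS b i (h (Submodule.mem_map_of_mem hm))

theorem range_levalPi_le_valuesDegLT [Fintype ι] :
    LinearMap.range (levalPi hS b) ≤ valuesDegLT hS b (Fintype.card ι) := by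
  rintro _ ⟨F, rfl⟩
  obtain ⟨e, he⟩ := exists_mem_degLT F
  rw [← Module.finrank_fintype_fun_eq_card 𝔽]
  exact Submodule.le_apply_finrank_of_monotone
    (fun _ _ h => Submodule.map_mono (degLT_mono h)) (fun _ => valuesDegLT_succ_succ_le hS b) e
    (Submodule.mem_map_of_mem he)

end valuesDegLT

theorem exists_deg_lt_card_levalPi_eq_single (hS : HasCommRule S σ δ) {ι : Type*} [Fintype ι]
    [DecidableEq ι] {b : ι → Fin n → 𝔽} (hb : Function.Injective b)
    (hB : PIndep S (Set.range b)) (i : ι) :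
    ∃ F : SkewPoly 𝔽 n, deg F < Fintype.card ι ∧ levalPi hS b F = Pi.single i 1 := by
  obtain ⟨F, hF, hFi⟩ := range_levalPi_le_valuesDegLT hS b (single_mem_range_levalPi hS hb hB i)
  exact ⟨F, mem_degLT.1 hF, hFi⟩

end SkewPoly

theorem stmt13_general {𝔽 : Type*} [DivisionRing 𝔽] {n : ℕ}
    (σ : 𝔽 → Matrix (Fin n) (Fin n) 𝔽) (δ : 𝔽 → Fin n → 𝔽)
    (S : RawMul 𝔽 n) (hS : HasCommRule S σ δ)
    (Ω : Set (Fin n → 𝔽))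
    (M : ℕ) (b : Fin M → (Fin n → 𝔽)) (hbinj : Function.Injective b)
    (hB : IsPBasis S (Set.range b) Ω) :
    (∃ F : Fin M → SkewPoly 𝔽 n, (∀ i : Fin M, deg (F i) < (M : WithBot ℕ)) ∧
      ∀ i j : Fin M, eval S (b j) (F i) = if i = j then 1 else 0) ∧
    (∀ F F' : Fin M → SkewPoly 𝔽 n,
      (∀ i j : Fin M, eval S (b j) (F i) = if i = j then 1 else 0) →
      (∀ i j : Fin M, eval S (b j) (F' i) = if i = j then 1 else 0) →
      ∀ (i : Fin M), ∀ a ∈ Ω, eval S a (F i) = eval S a (F' i)) := by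
  obtain ⟨-, hindep, hclosure⟩ := hB
  refine ⟨?_, fun F F' hF hF' i a ha => ?_⟩
  · choose F hdeg hF using exists_deg_lt_card_levalPi_eq_single hS hbinj hindep
    refine ⟨F, fun i => by simpa using hdeg i, fun i j => ?_⟩
    rw [← levalPi_apply hS, hF, Pi.single_apply]
    exact if_congr eq_comm rfl rfl
  · refine eval_eq_of_eval_eq_of_mem_pClosure hS ?_ (hclosure ▸ ha)
    rintro _ ⟨j, rfl⟩
    rw [hF i j, hF' i j]

/-- Every finite P-basis `b₁, …, b_M` of a P-closed set admits a dual
P-basis of skew polynomials of degree `< M`, and any two dual P-bases of the same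
P-basis define the same functions on `Ω`. -/
theorem stmt13 {𝔽 : Type*} [DivisionRing 𝔽] {n : ℕ} (hn : 0 < n)
    (σ : 𝔽 → Matrix (Fin n) (Fin n) 𝔽) (δ : 𝔽 → Fin n → 𝔽)
    (hσ : IsMatrixMorphism σ) (hδ : IsVectorDerivation σ δ)
    (S : RawMul 𝔽 n) (hS : HasCommRule S σ δ)
    (Ω : Set (Fin n → 𝔽)) (hΩ : IsPClosed S Ω)
    (M : ℕ) (b : Fin M → (Fin n → 𝔽)) (hbinj : Function.Injective b)
    (hB : IsPBasis S (Set.range b) Ω) :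
    (∃ F : Fin M → SkewPoly 𝔽 n, (∀ i : Fin M, deg (F i) < (M : WithBot ℕ)) ∧
      ∀ i j : Fin M, eval S (b j) (F i) = if i = j then 1 else 0) ∧
    (∀ F F' : Fin M → SkewPoly 𝔽 n,
      (∀ i j : Fin M, eval S (b j) (F i) = if i = j then 1 else 0) →
      (∀ i j : Fin M, eval S (b j) (F' i) = if i = j then 1 else 0) →
      ∀ (i : Fin M), ∀ a ∈ Ω, eval S a (F i) = eval S a (F' i)) :=
  stmt13_general σ δ S hS Ω M b hbinj hB
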